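/- For a positive integer d and L a natural number with 0 ≤ n ≤ L, the sequence n ↦ (-L)_n (d+L)_n / ((d + 1/2 + L)_n (-L + 1/2)_n) is (weakly) increasing in n on 0 ≤ n ≤ L. -/
import Mathlib


open Filter Real

/-- The Pochhammer symbol (rising factorial) for a real argument. -/
def risingFactorial (x : ℝ) : ℕ → ℝ
  | 0 => 1
  | n + 1 => risingFactorial x n * (x + n)

lemma rF_pos {x : ℝ} (hx : 0 < x) (n : ℕ) : 0 < risingFactorial x n := by
  induction n with
  | zero => simp [risingFactorial]
  | succ n ih => exact mul_pos ih (by positivity)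

lemma rF_sign (x : ℝ) : ∀ n : ℕ, (∀ k : ℕ, k < n → x + k < 0) →
    0 < (-1 : ℝ) ^ n * risingFactorial x n := by
  intro n
  induction n with
  | zero => simp [risingFactorial]
  | succ n ih =>
    intro h
    have h1 := ih (fun k hk => h k (hk.trans (Nat.lt_succ_self n)))
    have h2 : x + n < 0 := h n (Nat.lt_succ_self n)
    have e : (-1 : ℝ) ^ (n + 1) * risingFactorial x (n + 1)
        = ((-1 : ℝ) ^ n * risingFactorial x n) * (-(x + n)) := by
      simp only [risingFactorial, pow_succ]; ring
    rw [e]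
    exact mul_pos h1 (by linarith)

set_option maxHeartbeats 1000000 in
lemma pochhammer_step (d : ℕ) (hd : 0 < d) (L : ℕ) (n : ℕ) (hn : n + 1 ≤ L) :
    risingFactorial (-(L : ℝ)) n * risingFactorial ((d : ℝ) + L) n /
        (risingFactorial ((d : ℝ) + 1 / 2 + L) n * risingFactorial (-(L : ℝ) + 1 / 2) n) ≤
      risingFactorial (-(L : ℝ)) (n + 1) * risingFactorial ((d : ℝ) + L) (n + 1) /
        (risingFactorial ((d : ℝ) + 1 / 2 + L) (n + 1) *
          risingFactorial (-(L : ℝ) + 1 / 2) (n + 1)) := by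
  have hnL : (n : ℝ) + 1 ≤ (L : ℝ) := by exact_mod_cast hn
  have hd1 : (1 : ℝ) ≤ (d : ℝ) := by exact_mod_cast hd
  set u := risingFactorial (-(L : ℝ)) n with hu_def
  set v := risingFactorial ((d : ℝ) + L) n with hv_def
  set w := risingFactorial ((d : ℝ) + 1 / 2 + L) n with hw_def
  set z := risingFactorial (-(L : ℝ) + 1 / 2) n with hz_def
  have hv : 0 < v := rF_pos (by positivity) n
  have hw : 0 < w := rF_pos (by positivity) n
  have hu : 0 < (-1 : ℝ) ^ n * u := by
    apply rF_sign
    intro k hk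
    have : (k : ℝ) < (n : ℝ) := by exact_mod_cast hk
    linarith
  have hz : 0 < (-1 : ℝ) ^ n * z := by
    apply rF_sign
    intro k hk
    have : (k : ℝ) < (n : ℝ) := by exact_mod_cast hk
    linarith
  set s := (-1 : ℝ) ^ n with hs_def
  have hs : s ≠ 0 := by positivity
  have hstep : risingFactorial (-(L : ℝ)) (n + 1) = u * (-(L : ℝ) + n) := rfl
  have hstep2 : risingFactorial ((d : ℝ) + L) (n + 1) = v * ((d : ℝ) + L + n) := rfl
  have hstep3 : risingFactorial ((d : ℝ) + 1 / 2 + L) (n + 1)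
      = w * ((d : ℝ) + 1 / 2 + L + n) := rfl
  have hstep4 : risingFactorial (-(L : ℝ) + 1 / 2) (n + 1)
      = z * (-(L : ℝ) + 1 / 2 + n) := rfl
  rw [hstep, hstep2, hstep3, hstep4]
  have e1 : u * v / (w * z) = (s * u * v) / (w * (s * z)) := by
    rw [show s * u * v = s * (u * v) by ring, show w * (s * z) = s * (w * z) by ring,
      mul_div_mul_left _ _ hs]
  have e2 : u * (-(L : ℝ) + n) * (v * ((d : ℝ) + L + n)) /
        (w * ((d : ℝ) + 1 / 2 + L + n) * (z * (-(L : ℝ) + 1 / 2 + n)))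
      = (s * u) * ((L : ℝ) - n) * (v * ((d : ℝ) + L + n)) /
        ((w * ((d : ℝ) + 1 / 2 + L + n)) * ((s * z) * ((L : ℝ) - n - 1 / 2))) := by
    rw [show (s * u) * ((L : ℝ) - n) * (v * ((d : ℝ) + L + n))
          = (-s) * (u * (-(L : ℝ) + n) * (v * ((d : ℝ) + L + n))) by ring,
       show (w * ((d : ℝ) + 1 / 2 + L + n)) * ((s * z) * ((L : ℝ) - n - 1 / 2))
          = (-s) * (w * ((d : ℝ) + 1 / 2 + L + n) * (z * (-(L : ℝ) + 1 / 2 + n))) by ring,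
       mul_div_mul_left _ _ (neg_ne_zero.mpr hs)]
  rw [e1, e2]
  have hden1 : 0 < w * (s * z) := mul_pos hw (by linarith [hz])
  have hden2 : 0 < (w * ((d : ℝ) + 1 / 2 + L + n)) * ((s * z) * ((L : ℝ) - n - 1 / 2)) := by
    apply mul_pos (mul_pos hw (by positivity))
    apply mul_pos (by linarith [hz])
    linarith
  rw [div_le_div_iff₀ hden1 hden2]
  have hkey : ((d : ℝ) + 1 / 2 + L + n) * ((L : ℝ) - n - 1 / 2)
      ≤ ((L : ℝ) - n) * ((d : ℝ) + L + n) := by nlinarith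
  have hprod : 0 < (s * u) * v * w * (s * z) :=
    mul_pos (mul_pos (mul_pos hu hv) hw) hz
  nlinarith [mul_le_mul_of_nonneg_left hkey hprod.le]

theorem pochhammer_quotient_increasing (d : ℕ) (hd : 0 < d) (L : ℕ) :
    ∀ m n : ℕ, m ≤ n → n ≤ L →
      risingFactorial (-(L : ℝ)) m * risingFactorial ((d : ℝ) + L) m /
          (risingFactorial ((d : ℝ) + 1 / 2 + L) m * risingFactorial (-(L : ℝ) + 1 / 2) m) ≤
        risingFactorial (-(L : ℝ)) n * risingFactorial ((d : ℝ) + L) n /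
          (risingFactorial ((d : ℝ) + 1 / 2 + L) n * risingFactorial (-(L : ℝ) + 1 / 2) n) := by
  intro m n hmn
  induction n, hmn using Nat.le_induction with
  | base => intro _; exact le_refl _
  | succ n hmn ih =>
    intro hnL
    have h1 := ih (by omega)
    have h2 := pochhammer_step d hd L n hnL
    linarith
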